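/- Let 1 ≤ p ≤ q ≤ ∞ and let v, w be positive weights on a countable index set I. Then the approximation numbers of the inclusion Id : ℓ^p_w(I) → ℓ^q_v(I) satisfy a_n(Id) ≤ s_{n+1}((v(i)/w(i))_{i ∈ I}) for all n ∈ ℕ, where s_{n+1} denotes the non-increasing rearrangement. -/

import Mathlib

open MeasureTheory ENNReal

/-- The `n`-th approximation number of a bounded operator `S : E → F`:
`a_n(S) = inf {‖S − T‖ : T bounded linear, rank T ≤ n}`. -/
noncomputable def approxNumber {E F : Type*} [NormedAddCommGroup E] [NormedSpace ℂ E]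
    [NormedAddCommGroup F] [NormedSpace ℂ F] (S : E →L[ℂ] F) (n : ℕ) : ℝ :=
  sInf {c : ℝ | ∃ T : E →L[ℂ] F,
    Module.rank ℂ (LinearMap.range (T : E →ₗ[ℂ] F)) ≤ n ∧ c = ‖S - T‖}

/-- The non-increasing rearrangement `s_n(h) = inf {σ ≥ 0 : #{i : |h i| ≥ σ} < n}`. -/
noncomputable def rearrangement {I : Type*} (h : I → ℝ) (n : ℕ) : ℝ :=
  sInf {σ : ℝ | 0 ≤ σ ∧ ∃ hfin : {i : I | σ ≤ |h i|}.Finite, hfin.toFinset.card < n}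

/-! Keep the fewer than `n + 1` coordinates on which `|v / w| ≥ σ`: this is an operator of rank
at most `n`, and what remains of the diagonal operator has a multiplier of modulus `< σ`.
Because a pointwise bound `|x i| ≤ σ |y i|` passes from `ℓ^p` to `ℓ^q` norms when `p ≤ q`,
the remainder has norm at most `σ`, so `a_n ≤ σ` for every admissible `σ`. -/

theorem approxNumber_le_norm_sub {E F : Type*} [NormedAddCommGroup E] [NormedSpace ℂ E]
    [NormedAddCommGroup F] [NormedSpace ℂ F] (S T : E →L[ℂ] F) {n : ℕ}
    (hT : Module.rank ℂ (LinearMap.range (T : E →ₗ[ℂ] F)) ≤ n) :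
    approxNumber S n ≤ ‖S - T‖ :=
  csInf_le ⟨0, by rintro c ⟨T, -, rfl⟩; exact norm_nonneg _⟩ ⟨T, hT, rfl⟩

theorem le_rearrangement {I : Type*} {h : I → ℝ} {C : ℝ} (hC : ∀ i, |h i| ≤ C) {n : ℕ}
    (hn : 0 < n) {a : ℝ}
    (ha : ∀ σ, 0 ≤ σ → ∀ hfin : {i | σ ≤ |h i|}.Finite, hfin.toFinset.card < n → a ≤ σ) :
    a ≤ rearrangement h n := by
  have hempty : {i | max C 0 + 1 ≤ |h i|} = ∅ :=
    Set.eq_empty_of_forall_notMem fun i hi => by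
      linarith [hC i, le_max_left C 0, Set.mem_ofPred_eq ▸ hi]
  refine le_csInf ⟨max C 0 + 1, by positivity, hempty ▸ Set.finite_empty, ?_⟩ ?_
  · simpa [hempty] using hn
  · rintro σ ⟨hσ, hfin, hcard⟩
    exact ha σ hσ hfin hcard

namespace lp

variable {α : Type*}

theorem norm_le_mul_norm_of_exponent_le {E F : α → Type*} [∀ i, NormedAddCommGroup (E i)]
    [∀ i, NormedAddCommGroup (F i)] {p q : ℝ≥0∞} (hp : p ≠ 0) (hpq : p ≤ q)
    {x : lp E q} {y : lp F p} {c : ℝ} (hc : 0 ≤ c) (h : ∀ i, ‖x i‖ ≤ c * ‖y i‖) :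
    ‖x‖ ≤ c * ‖y‖ := by
  have hy : ∀ i, ‖y i‖ ≤ ‖y‖ := norm_apply_le_norm hp y
  rcases eq_or_ne q ∞ with rfl | hq
  · exact norm_le_of_forall_le (mul_nonneg hc (norm_nonneg' y)) fun i =>
      (h i).trans (by gcongr; exact hy i)
  have hpr : 0 < p.toReal := ENNReal.toReal_pos hp (ne_top_of_le_ne_top hq hpq)
  have hpqr : p.toReal ≤ q.toReal := ENNReal.toReal_mono hq hpq
  have hqr : 0 < q.toReal := hpr.trans_le hpqr
  -- `‖y i‖ ^ q ≤ ‖y i‖ ^ p * ‖y‖ ^ (q - p)` puts the `ℓ^p` sum inside the `ℓ^q` sum.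
  have hsplit : ∀ t : ℝ, 0 ≤ t → t ^ q.toReal = t ^ p.toReal * t ^ (q.toReal - p.toReal) :=
    fun t ht => by rw [← Real.rpow_add' ht (by linarith), add_sub_cancel]
  refine norm_le_of_forall_sum_le hqr (mul_nonneg hc (norm_nonneg' y)) fun s => ?_
  calc ∑ i ∈ s, ‖x i‖ ^ q.toReal
      ≤ ∑ i ∈ s, c ^ q.toReal * ‖y‖ ^ (q.toReal - p.toReal) * ‖y i‖ ^ p.toReal := by
        refine Finset.sum_le_sum fun i _ => ?_
        calc ‖x i‖ ^ q.toReal ≤ (c * ‖y i‖) ^ q.toReal := by gcongr; exact h i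
          _ = c ^ q.toReal * (‖y i‖ ^ p.toReal * ‖y i‖ ^ (q.toReal - p.toReal)) := by
              rw [Real.mul_rpow hc (norm_nonneg _), hsplit _ (norm_nonneg _)]
          _ ≤ c ^ q.toReal * (‖y i‖ ^ p.toReal * ‖y‖ ^ (q.toReal - p.toReal)) := by
              have hyi := hy i
              have hqp : 0 ≤ q.toReal - p.toReal := by linarith
              gcongr
          _ = _ := by ring
    _ = c ^ q.toReal * ‖y‖ ^ (q.toReal - p.toReal) * ∑ i ∈ s, ‖y i‖ ^ p.toReal := by
        rw [Finset.mul_sum]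
    _ ≤ c ^ q.toReal * ‖y‖ ^ (q.toReal - p.toReal) * ‖y‖ ^ p.toReal :=
        mul_le_mul_of_nonneg_left (sum_rpow_le_norm_rpow hpr y s)
          (mul_nonneg (Real.rpow_nonneg hc _) (Real.rpow_nonneg (norm_nonneg' y) _))
    _ = (c * ‖y‖) ^ q.toReal := by
        rw [Real.mul_rpow hc (norm_nonneg' y), hsplit _ (norm_nonneg' y)]; ring

variable {𝕜 : Type*} [NontriviallyNormedField 𝕜] {p q : ℝ≥0∞} [Fact (1 ≤ p)] [Fact (1 ≤ q)]

section Truncate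

variable [DecidableEq α]

variable (𝕜 p) in
noncomputable def truncate (s : Finset α) : lp (fun _ : α => 𝕜) p →L[𝕜] lp (fun _ : α => 𝕜) p :=
  ∑ j ∈ s, (evalCLM 𝕜 (fun _ : α => 𝕜) p j).smulRight (lp.single (E := fun _ : α => 𝕜) p j 1)

theorem truncate_apply (s : Finset α) (f : lp (fun _ : α => 𝕜) p) :
    truncate 𝕜 p s f = ∑ j ∈ s, f j • lp.single p j (1 : 𝕜) := by
  simp [truncate, evalCLM]

theorem truncate_apply_apply (s : Finset α) (f : lp (fun _ : α => 𝕜) p) (i : α) :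
    truncate 𝕜 p s f i = if i ∈ s then f i else 0 := by
  rw [truncate_apply, coeFn_sum, Finset.sum_apply]
  simp [Pi.single_apply]

theorem rank_range_comp_truncate_le {F : Type*} [AddCommGroup F] [Module 𝕜 F]
    [TopologicalSpace F]
    (T : lp (fun _ : α => 𝕜) p →L[𝕜] F) (s : Finset α) :
    Module.rank 𝕜 (LinearMap.range (T.comp (truncate 𝕜 p s) : lp (fun _ : α => 𝕜) p →ₗ[𝕜] F)) ≤
      s.card := by
  have hspan : LinearMap.range (truncate 𝕜 p s : lp (fun _ : α => 𝕜) p →ₗ[𝕜] _) ≤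
      Submodule.span 𝕜 ((fun j => lp.single (E := fun _ : α => 𝕜) p j 1) '' s) := by
    rintro _ ⟨f, rfl⟩
    rw [ContinuousLinearMap.coe_coe, truncate_apply]
    exact Submodule.sum_mem _ fun j hj =>
      Submodule.smul_mem _ _ (Submodule.subset_span ⟨j, hj, rfl⟩)
  have hrank :
      Module.rank 𝕜 (LinearMap.range
        (truncate 𝕜 p s : lp (fun _ : α => 𝕜) p →ₗ[𝕜] lp (fun _ : α => 𝕜) p)) ≤ s.card :=
    (Submodule.rank_mono hspan).trans
      ((rank_span_le _).trans
        (Cardinal.lift_le_nat_iff.mp (Cardinal.mk_image_le_lift.trans (by simp))))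
  exact Cardinal.lift_le_nat_iff.mp
    ((LinearMap.lift_rank_comp_le_right _ _).trans (Cardinal.lift_le_nat_iff.mpr hrank))

theorem norm_multiplier_le_opNorm {T : lp (fun _ : α => 𝕜) p →L[𝕜] lp (fun _ : α => 𝕜) q}
    {d : α → 𝕜} (hT : ∀ f i, T f i = d i * f i) (i : α) : ‖d i‖ ≤ ‖T‖ := by
  have hq : q ≠ 0 := (zero_lt_one.trans_le Fact.out).ne'
  have hsingle : ‖lp.single (E := fun _ : α => 𝕜) p i 1‖ = 1 := by
    rw [lp.norm_single (zero_lt_one.trans_le Fact.out), norm_one]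
  calc ‖d i‖ = ‖T (lp.single (E := fun _ : α => 𝕜) p i 1) i‖ := by
        rw [hT, lp.single_apply_self, mul_one]
    _ ≤ ‖T (lp.single p i 1)‖ := norm_apply_le_norm hq _ i
    _ ≤ ‖T‖ := T.le_of_opNorm_le le_rfl _ |>.trans_eq (by rw [hsingle, mul_one])

theorem norm_sub_comp_truncate_le (hpq : p ≤ q)
    {T : lp (fun _ : α => 𝕜) p →L[𝕜] lp (fun _ : α => 𝕜) q} {d : α → 𝕜}
    (hT : ∀ f i, T f i = d i * f i) {s : Finset α} {σ : ℝ} (hσ : 0 ≤ σ)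
    (hd : ∀ i ∉ s, ‖d i‖ ≤ σ) : ‖T - T.comp (truncate 𝕜 p s)‖ ≤ σ := by
  refine ContinuousLinearMap.opNorm_le_bound _ hσ fun f => ?_
  refine norm_le_mul_norm_of_exponent_le (zero_lt_one.trans_le Fact.out).ne' hpq hσ fun i => ?_
  have hcoord : (T - T.comp (truncate 𝕜 p s)) f i = if i ∈ s then 0 else d i * f i := by
    rw [sub_apply, coeFn_sub, Pi.sub_apply, ContinuousLinearMap.comp_apply,
      hT, hT, truncate_apply_apply]
    split_ifs <;> simp
  rw [hcoord]
  split_ifs with hi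
  · simpa using mul_nonneg hσ (norm_nonneg (f i))
  · rw [norm_mul]
    exact mul_le_mul_of_nonneg_right (hd i hi) (norm_nonneg _)

end Truncate

end lp

theorem approxNumber_diagonal_le_rearrangement_general
    {I : Type*} (p q : ℝ≥0∞) [Fact (1 ≤ p)] [Fact (1 ≤ q)] (hpq : p ≤ q)
    (w v : I → ℝ)
    (T : lp (fun _ : I => ℂ) p →L[ℂ] lp (fun _ : I => ℂ) q)
    (hT : ∀ (f : lp (fun _ : I => ℂ) p) (i : I), (T f : ∀ _ : I, ℂ) i = (v i / w i : ℝ) * f i) :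
    ∀ n : ℕ, approxNumber T n ≤ rearrangement (fun i => v i / w i) (n + 1) := by
  classical
  intro n
  have hnorm : ∀ i, ‖((v i / w i : ℝ) : ℂ)‖ = |v i / w i| := fun i => Complex.norm_real _
  refine le_rearrangement (fun i => hnorm i ▸ lp.norm_multiplier_le_opNorm hT i) n.succ_pos ?_
  intro σ hσ hfin hcard
  set s := hfin.toFinset
  have hsmall : ∀ i ∉ s, ‖((v i / w i : ℝ) : ℂ)‖ ≤ σ := fun i hi => by
    rw [hnorm]
    exact (not_le.mp fun h => hi (hfin.mem_toFinset.mpr h)).le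
  calc approxNumber T n ≤ ‖T - T.comp (lp.truncate ℂ p s)‖ :=
        approxNumber_le_norm_sub _ _
          ((lp.rank_range_comp_truncate_le T s).trans
            (by exact_mod_cast Nat.lt_succ_iff.mp hcard))
    _ ≤ σ := lp.norm_sub_comp_truncate_le hpq hT hσ hsmall

/-- Let `1 ≤ p ≤ q ≤ ∞` and `v, w` positive weights on a countable index
set `I`. The approximation numbers of the inclusion `Id : ℓ^p_w(I) → ℓ^q_v(I)` (realized,
via the isometric identifications with `ℓ^p` and `ℓ^q`, as the diagonal operator with
multiplier `v/w`) satisfy `a_n(Id) ≤ s_{n+1}((v i / w i)_i)`. -/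
theorem approxNumber_diagonal_le_rearrangement
    {I : Type*} [Countable I] (p q : ℝ≥0∞) [Fact (1 ≤ p)] [Fact (1 ≤ q)] (hpq : p ≤ q)
    (w v : I → ℝ) (hw : ∀ i, 0 < w i) (hv : ∀ i, 0 < v i)
    (T : lp (fun _ : I => ℂ) p →L[ℂ] lp (fun _ : I => ℂ) q)
    (hT : ∀ (f : lp (fun _ : I => ℂ) p) (i : I), (T f : ∀ _ : I, ℂ) i = (v i / w i : ℝ) * f i) :
    ∀ n : ℕ, approxNumber T n ≤ rearrangement (fun i => v i / w i) (n + 1) :=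
  approxNumber_diagonal_le_rearrangement_general p q hpq w v T hT
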